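/- (Lindblad) Let ζ be a ℂ-linear map on M_d(ℂ) that is completely positive (its Choi matrix is positive semidefinite) and unital (ζ(𝟙) = 𝟙), and suppose its Hilbert–Schmidt adjoint has a positive definite fixed point, i.e. there exists a positive definite matrix ρ₀ ∈ M_d(ℂ) with Tr(ρ₀ · ζ(X)) = Tr(ρ₀ · X) for all X ∈ M_d(ℂ). Then the fixed subspace of ζ is closed under matrix multiplication: if ζ(Z) = Z and ζ(W) = W, then ζ(Z·W) = Z·W. -/

import Mathlib

open Matrix Kronecker
open scoped ComplexOrder

/-- A bipartite matrix on `ℂ^{d₁} ⊗ ℂ^{d₂}` is separable if it is a finite sum of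
Kronecker products of positive semidefinite matrices. -/
def MatSep {d₁ d₂ : ℕ} (ρ : Matrix (Fin d₁ × Fin d₂) (Fin d₁ × Fin d₂) ℂ) : Prop :=
  ∃ (k : ℕ) (A : Fin k → Matrix (Fin d₁) (Fin d₁) ℂ) (B : Fin k → Matrix (Fin d₂) (Fin d₂) ℂ),
    (∀ i, (A i).PosSemidef) ∧ (∀ i, (B i).PosSemidef) ∧ ρ = ∑ i, A i ⊗ₖ B i

/-- The Choi matrix `C(φ) = Σ_{i,j} φ(E_{ij}) ⊗ E_{ij}` of a linear map on `M_d(ℂ)`. -/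
noncomputable def choi {d : ℕ} (φ : Matrix (Fin d) (Fin d) ℂ →ₗ[ℂ] Matrix (Fin d) (Fin d) ℂ) :
    Matrix (Fin d × Fin d) (Fin d × Fin d) ℂ :=
  ∑ i : Fin d, ∑ j : Fin d, φ (Matrix.single i j 1) ⊗ₖ Matrix.single i j (1 : ℂ)

/-- A quantum channel: trace-preserving and completely positive (positive semidefinite
Choi matrix). -/
def IsQChannel {d : ℕ} (φ : Matrix (Fin d) (Fin d) ℂ →ₗ[ℂ] Matrix (Fin d) (Fin d) ℂ) : Prop :=
  (∀ X, (φ X).trace = X.trace) ∧ (choi φ).PosSemidef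

/-! Choi's theorem puts `ζ` in Kraus form `ζ X = ∑ Kᵢ X Kᵢᴴ`, and unitality says
`∑ Kᵢ Kᵢᴴ = 1`. For a fixed point `A` the defect `ζ (A Aᴴ) - A Aᴴ` is then the positive matrix
`∑ [Kᵢ, A] [Kᵢ, A]ᴴ`; its pairing with the faithful invariant state `ρ₀` vanishes, so every
commutator `[Kᵢ, A]` is zero. Since the fixed space is closed under `ᴴ`, fixed points commute with
all `Kᵢ` and `Kᵢᴴ`, whence `ζ (Z W) = ∑ Kᵢ Z W Kᵢᴴ = Z (∑ Kᵢ Kᵢᴴ) W = Z W`. -/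

namespace Matrix

section Kraus

variable {ι n R : Type*} [Fintype ι] [Fintype n] [CommRing R] [StarRing R]

def krausMap (K : ι → Matrix n n R) : Matrix n n R →ₗ[R] Matrix n n R where
  toFun X := ∑ i, K i * X * (K i)ᴴ
  map_add' X Y := by simp only [mul_add, add_mul, Finset.sum_add_distrib]
  map_smul' c X := by
    simp only [Matrix.mul_smul, Matrix.smul_mul, Finset.smul_sum, RingHom.id_apply]

lemma krausMap_apply (K : ι → Matrix n n R) (X : Matrix n n R) :
    krausMap K X = ∑ i, K i * X * (K i)ᴴ := rfl

lemma krausMap_conjTranspose (K : ι → Matrix n n R) (X : Matrix n n R) :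
    krausMap K Xᴴ = (krausMap K X)ᴴ := by
  simp only [krausMap_apply, conjTranspose_sum, conjTranspose_mul, conjTranspose_conjTranspose,
    Matrix.mul_assoc]

lemma sum_commutator_mul_conjTranspose [DecidableEq n] (K : ι → Matrix n n R) (A : Matrix n n R) :
    ∑ i, (K i * A - A * K i) * (K i * A - A * K i)ᴴ =
      krausMap K (A * Aᴴ) - krausMap K A * Aᴴ - A * krausMap K Aᴴ + A * krausMap K 1 * Aᴴ := by
  simp only [krausMap_apply, Finset.sum_mul, Finset.mul_sum, ← Finset.sum_sub_distrib,
    ← Finset.sum_add_distrib]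
  refine Finset.sum_congr rfl fun i _ => ?_
  simp only [conjTranspose_sub, conjTranspose_mul, sub_mul, mul_sub, Matrix.mul_assoc,
    Matrix.mul_one]
  abel

end Kraus

section PosDef

variable {𝕜 n : Type*} [RCLike 𝕜] [Fintype n] {ρ : Matrix n n 𝕜}

lemma PosSemidef.trace_mul_mul_conjTranspose_nonneg (hρ : ρ.PosSemidef) (D : Matrix n n 𝕜) :
    0 ≤ (ρ * (D * Dᴴ)).trace := by
  rw [← Matrix.mul_assoc, trace_mul_comm]
  simpa only [Matrix.mul_assoc] using (hρ.conjTranspose_mul_mul_same D).trace_nonneg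

open scoped MatrixOrder in
lemma PosDef.trace_mul_mul_conjTranspose_eq_zero_iff [DecidableEq n] (hρ : ρ.PosDef)
    {D : Matrix n n 𝕜} :
    (ρ * (D * Dᴴ)).trace = 0 ↔ D = 0 := by
  obtain ⟨y, hy, rfl⟩ :=
    CStarAlgebra.isStrictlyPositive_iff_eq_star_mul_self.mp hρ.isStrictlyPositive
  rw [← hy.mul_right_eq_zero, ← trace_mul_conjTranspose_self_eq_zero_iff, star_eq_conjTranspose,
    Matrix.mul_assoc, trace_mul_comm, conjTranspose_mul]
  simp only [Matrix.mul_assoc]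

end PosDef

section Fixed

variable {ι n 𝕜 : Type*} [Fintype ι] [Fintype n] [DecidableEq n] [RCLike 𝕜]
  {K : ι → Matrix n n 𝕜} {ρ : Matrix n n 𝕜}

lemma commute_of_krausMap_eq_self (hunit : krausMap K 1 = 1) (hρ : ρ.PosDef)
    (hinv : ∀ X, (ρ * krausMap K X).trace = (ρ * X).trace) {A : Matrix n n 𝕜}
    (hA : krausMap K A = A) (i : ι) : Commute (K i) A := by
  have hA' : krausMap K Aᴴ = Aᴴ := by rw [krausMap_conjTranspose, hA]
  have hsum : ∑ j, (ρ * ((K j * A - A * K j) * (K j * A - A * K j)ᴴ)).trace = 0 := by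
    rw [← trace_sum, ← Finset.mul_sum, sum_commutator_mul_conjTranspose, hA, hA', hunit,
      Matrix.mul_one, sub_add_cancel, Matrix.mul_sub, trace_sub, hinv, sub_self]
  have hterm := (Finset.sum_eq_zero_iff_of_nonneg fun j _ =>
    hρ.posSemidef.trace_mul_mul_conjTranspose_nonneg _).mp hsum i (Finset.mem_univ i)
  exact sub_eq_zero.mp (hρ.trace_mul_mul_conjTranspose_eq_zero_iff.mp hterm)

lemma krausMap_mul_eq_self (hunit : krausMap K 1 = 1) (hρ : ρ.PosDef)
    (hinv : ∀ X, (ρ * krausMap K X).trace = (ρ * X).trace) {Z W : Matrix n n 𝕜}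
    (hZ : krausMap K Z = Z) (hW : krausMap K W = W) : krausMap K (Z * W) = Z * W := by
  have hZK (i : ι) : K i * Z = Z * K i := commute_of_krausMap_eq_self hunit hρ hinv hZ i
  have hWK (i : ι) : W * (K i)ᴴ = (K i)ᴴ * W := by
    have hW' : krausMap K Wᴴ = Wᴴ := by rw [krausMap_conjTranspose, hW]
    simpa only [conjTranspose_mul, conjTranspose_conjTranspose] using
      congrArg conjTranspose (commute_of_krausMap_eq_self hunit hρ hinv hW' i).eq
  calc krausMap K (Z * W) = ∑ i, Z * (K i * (K i)ᴴ) * W := by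
        refine Finset.sum_congr rfl fun i _ => ?_
        rw [← Matrix.mul_assoc, hZK, Matrix.mul_assoc, Matrix.mul_assoc, hWK]
        simp only [Matrix.mul_assoc]
    _ = Z * krausMap K 1 * W := by
        simp only [krausMap_apply, Matrix.mul_one, Finset.mul_sum, Finset.sum_mul]
    _ = Z * W := by rw [hunit, Matrix.mul_one]

end Fixed

lemma exists_krausMap_eq_of_posSemidef_choi {d : ℕ}
    {φ : Matrix (Fin d) (Fin d) ℂ →ₗ[ℂ] Matrix (Fin d) (Fin d) ℂ} (hφ : (choi φ).PosSemidef) :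
    ∃ (m : ℕ) (K : Fin m → Matrix (Fin d) (Fin d) ℂ), φ = krausMap K := by
  obtain ⟨m, v, hv⟩ := posSemidef_iff_eq_sum_vecMulVec.mp hφ
  refine ⟨m, fun k => of fun a b => v k (a, b), ext_linearMap ℂ fun i j => ?_⟩
  refine LinearMap.ext_ring (Matrix.ext fun a c => ?_)
  have hchoi : choi φ (a, i) (c, j) = φ (single i j 1) a c := by
    simp [choi, sum_apply, kroneckerMap_apply, single_apply, ite_and]
  simp [← hchoi, hv, krausMap_apply, sum_apply, vecMulVec_apply, mul_apply, single_apply, ite_and]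

end Matrix

/-- Lindblad's theorem: for a completely positive unital map whose Hilbert–Schmidt adjoint
has a positive definite fixed point, the fixed subspace is closed under multiplication. -/
theorem stmt_17 (d : ℕ) (ζ : Matrix (Fin d) (Fin d) ℂ →ₗ[ℂ] Matrix (Fin d) (Fin d) ℂ)
    (hCP : (choi ζ).PosSemidef) (hu : ζ 1 = 1)
    (ρ₀ : Matrix (Fin d) (Fin d) ℂ) (hρ₀ : ρ₀.PosDef)
    (hfix : ∀ X : Matrix (Fin d) (Fin d) ℂ, (ρ₀ * ζ X).trace = (ρ₀ * X).trace) :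
    ∀ Z W : Matrix (Fin d) (Fin d) ℂ, ζ Z = Z → ζ W = W → ζ (Z * W) = Z * W := by
  intro Z W hZ hW
  obtain ⟨m, K, rfl⟩ := Matrix.exists_krausMap_eq_of_posSemidef_choi hCP
  exact Matrix.krausMap_mul_eq_self hu hρ₀ hfix hZ hW
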